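/- Let (X, k) be a harvestable pair of a 2-colored rooted tree and index. Then for every M \ge 0, \zeta^{\sha}_{\widehat{S},M}(X; k) = \sum_{v \in V_\bullet} (-1)^{k_{P(rt,v)}} \sum_{l \in \mathbb{Z}_{\ge0}^{P(rt,v)}} b_{P(rt,v)}(k, l)\, \zeta_M(X_v; k+l)\, t^{l_{P(rt,v)}} in \mathbb{Q}[[t]], where \zeta^{\sha}_{\widehat{S},M}(X;k) = \sum_{u \in V_\bullet} \zeta_M(X, u; k) with \zeta_M(X, u; k) = \sum_{(m_v) \in I_M(V_\bullet,u)} \prod_{e\in E} (\sum_{v: e \in P(rt,v)} (m_v + \delta_{u,v} t))^{-k_e}, and I_M(V_\bullet, u) = \{(m_v): m_v > 0 for v \ne u, -M < m_u < 0, \sum m_v = 0\}. -/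

import Mathlib

attribute [local instance] Classical.propDecidable

/-- A 2-colored rooted tree X = (V, E, rt, V_•): a finite tree (V, E) with a root
rt ∈ V and a subset V_• ⊆ V containing all terminal (degree-1) vertices. -/
structure CRT : Type 1 where
  V : Type
  [fV : Fintype V]
  [dV : DecidableEq V]
  G : SimpleGraph V
  isTree : G.IsTree
  rt : V
  Vb : Finset V
  terminal_mem : ∀ v : V, (G.neighborSet v).ncard = 1 → v ∈ Vb

attribute [instance] CRT.fV CRT.dV

/-- The unique path between two vertices of a tree, as a walk. -/
noncomputable def tpath {V : Type} (G : SimpleGraph V) (h : G.IsTree) (a b : V) :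
    G.Walk a b :=
  (((SimpleGraph.isTree_iff_existsUnique_path).mp h).2 a b).exists.choose

/-- P(a,b): the list of edges of the path from a to b. -/
noncomputable def CRT.pEdges (A : CRT) (a b : A.V) : List (Sym2 A.V) :=
  (tpath A.G A.isTree a b).edges

/-- k_{P(a,b)} = ∑_{e ∈ P(a,b)} k_e. -/
noncomputable def CRT.kP (A : CRT) (k : Sym2 A.V → ℕ) (a b : A.V) : ℕ :=
  ((A.pEdges a b).map k).sum

/-- An index k on X is essentially positive if k_{P(v,v')} > 0 for all distinct
v, v' ∈ V_•. -/
def CRT.EssPos (A : CRT) (k : Sym2 A.V → ℕ) : Prop :=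
  ∀ a ∈ A.Vb, ∀ b ∈ A.Vb, a ≠ b → 0 < A.kP k a b

/-- The finite multiple harmonic sum ζ_M(X; k) attached to a 2-colored rooted tree:
∑_{(m_v) ∈ ℤ_{≥1}^{V_•}, Σ m_v = M} ∏_{e ∈ E} (∑_{v ∈ V_• : e ∈ P(rt,v)} m_v)^{-k_e}. -/
noncomputable def CRT.zetaM (A : CRT) (k : Sym2 A.V → ℕ) (M : ℕ) : ℚ :=
  ∑ m ∈ (A.Vb.pi fun _ => Finset.Icc 1 M).filter
      (fun m => (∑ v ∈ A.Vb.attach, m v.1 v.2) = M),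
    ∏ e ∈ Finset.univ.filter (fun e : Sym2 A.V => e ∈ A.G.edgeSet),
      ((∑ v ∈ A.Vb.attach.filter (fun v => e ∈ A.pEdges A.rt v.1),
          (m v.1 v.2 : ℚ))⁻¹) ^ k e

/-- Re-rooting X_v = (V, E, v, V_•). -/
noncomputable def CRT.reroot (A : CRT) (v : A.V) : CRT :=
  ⟨A.V, A.G, A.isTree, v, A.Vb, A.terminal_mem⟩

/-- The binomial coefficient binom(k+l-1, l), with the convention binom(l-1,l) = δ_{l,0}. -/
def bq (k l : ℕ) : ℚ := (Nat.choose (k + l - 1) l : ℚ)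

/-- A pair (X, k) is harvestable: (H1) the root is a terminal and lies in V_•;
(H2) white vertices are branched; (H3) black vertices are unbranched; (H4) edges from a
white parent have positive index entry; (H5) edges between adjacent black vertices have
positive index entry. -/
def Harvestable (A : CRT) (k : Sym2 A.V → ℕ) : Prop :=
  (A.G.neighborSet A.rt).ncard = 1 ∧ A.rt ∈ A.Vb ∧
  (∀ v : A.V, v ∉ A.Vb → 3 ≤ (A.G.neighborSet v).ncard) ∧
  (∀ v : A.V, v ∈ A.Vb → (A.G.neighborSet v).ncard ≤ 2) ∧
  (∀ v u : A.V, v ∉ A.Vb → A.G.Adj v u → s(v, u) ∈ A.pEdges A.rt u → 0 < k s(v, u)) ∧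
  (∀ u v : A.V, u ∈ A.Vb → v ∈ A.Vb → A.G.Adj u v → 0 < k s(u, v))

/-- ζ_M(X, u; k) ∈ ℚ[[t]]: the sum over (m_v) ∈ I_M(V_•, u) of
∏_{e ∈ E} (∑_{v ∈ V_• : e ∈ P(rt,v)} (m_v + δ_{u,v} t))^{-k_e}, each factor expanded as
a formal power series in t. -/
noncomputable def zetaU (A : CRT) (k : Sym2 A.V → ℕ) (M : ℕ) (u : {x // x ∈ A.Vb}) :
    PowerSeries ℚ :=
  ∑ m ∈ (A.Vb.pi fun _ => Finset.Icc (-(M : ℤ)) (M : ℤ)).filter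
      (fun m => (∀ v, ∀ hv : v ∈ A.Vb, v ≠ u.1 → 0 < m v hv) ∧
        (-(M : ℤ) < m u.1 u.2 ∧ m u.1 u.2 < 0) ∧ (∑ v ∈ A.Vb.attach, m v.1 v.2) = 0),
    (∏ e ∈ Finset.univ.filter (fun e : Sym2 A.V => e ∈ A.G.edgeSet),
        (PowerSeries.C (R := ℚ) (∑ v ∈ A.Vb.attach.filter (fun v => e ∈ A.pEdges A.rt v.1),
            (m v.1 v.2 : ℚ))
          + if e ∈ A.pEdges A.rt u.1 then PowerSeries.X else 0) ^ k e)⁻¹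

/-- ζ^ш_{Ŝ,M}(X; k) = ∑_{u ∈ V_•} ζ_M(X, u; k). -/
noncomputable def zetaShat (A : CRT) (k : Sym2 A.V → ℕ) (M : ℕ) : PowerSeries ℚ :=
  ∑ u ∈ A.Vb.attach, zetaU A k M u

/-!
Fix `u ∈ V_•`. The substitution `m_u ↦ m_u + M` maps `I_M(V_•, u)` bijectively onto the
compositions `(m_v)` of `M` indexed by `V_•`; this needs a second black vertex, and the tree has
two leaves, which are black. Since `∑ m_v = 0`, for an edge `e` on `P(rt, u)` the sum of the `m_v`
over the vertices beyond `e` as seen from `rt` is minus the corresponding sum as seen from `u`,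
while for the other edges the two sums agree. So the factor of `e` in `ζ_M(X, u; k)` is
`(-1)^{k_e} (b_e - t)^{-k_e}` on `P(rt, u)` and `b_e^{-k_e}` elsewhere, with `b_e` the edge sum of
`X_u`, and expanding `(b - t)^{-k} = ∑_l binom(k+l-1, l) b^{-k-l} t^l` gives the `u`-th summand.
-/

lemma sum_range_bq (k n : ℕ) : ∑ j ∈ Finset.range (n + 1), bq k j = bq (k + 1) n := by
  induction n with
  | zero => simp [bq]
  | succ n ih =>
    rw [Finset.sum_range_succ, ih]
    simp only [bq, ← Nat.cast_add]
    rw [show k + 1 + n - 1 = k + n by omega, show k + (n + 1) - 1 = k + n by omega,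
      show k + 1 + (n + 1) - 1 = k + n + 1 by omega, Nat.choose_succ_succ']

namespace PowerSeries

variable {K : Type*} [Field K]

lemma inv_prod {ι : Type*} (s : Finset ι) (f : ι → K⟦X⟧) :
    (∏ i ∈ s, f i)⁻¹ = ∏ i ∈ s, (f i)⁻¹ := by
  classical
  induction s using Finset.induction_on with
  | empty => simp
  | insert a s ha ih => rw [Finset.prod_insert ha, Finset.prod_insert ha, PowerSeries.mul_inv_rev,
      ih, mul_comm]

lemma inv_C_sub_X (b : K) : (C b - X)⁻¹ = mk fun n => b⁻¹ ^ (n + 1) := by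
  rcases eq_or_ne b 0 with rfl | hb
  · rw [inv_eq_zero.mpr (by simp)]
    ext n
    simp
  · rw [inv_eq_iff_mul_eq_one (by simpa using hb)]
    have := invUnitsSub_mul_sub (Units.mk0 b hb)
    rw [Units.val_mk0] at this
    convert this using 2
    ext n
    simp [coeff_invUnitsSub]

lemma inv_C_sub_X_pow (b : ℚ) (k : ℕ) :
    ((C b - X) ^ k)⁻¹ = mk fun n => bq k n * b⁻¹ ^ (k + n) := by
  induction k with
  | zero =>
    ext n
    cases n <;> simp [bq, coeff_one]
  | succ k ih =>
    ext n
    rw [pow_succ, PowerSeries.mul_inv_rev, inv_C_sub_X, ih, coeff_mul,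
      Finset.Nat.sum_antidiagonal_eq_sum_range_succ_mk, coeff_mk, ← sum_range_bq,
      Finset.sum_mul, ← Finset.sum_range_reflect]
    refine Finset.sum_congr rfl fun j hj => ?_
    have hj : j ≤ n := Nat.lt_succ_iff.mp (Finset.mem_range.mp hj)
    simp only [coeff_mk]
    rw [show n + 1 - 1 - j = n - j by omega, show k + 1 + n = (j + 1) + (k + (n - j)) by omega,
      pow_add, Nat.sub_sub_self hj]
    ring

end PowerSeries

section Antidiagonal

variable {ι : Type*} [DecidableEq ι]

def depAntidiag (s : Finset ι) (N : ℕ) : Finset (∀ i ∈ s, ℕ) :=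
  (s.pi fun _ => Finset.range (N + 1)).filter fun l => ∑ i ∈ s.attach, l i.1 i.2 = N

lemma sum_finsuppAntidiag_eq_sum_depAntidiag {M : Type*} [AddCommMonoid M] (s : Finset ι)
    (N : ℕ) (F : (∀ i ∈ s, ℕ) → M) :
    ∑ l ∈ s.finsuppAntidiag N, F (fun i _ => l i) = ∑ l ∈ depAntidiag s N, F l := by
  refine Finset.sum_nbij' (fun l i _ => l i) (fun l => Finsupp.indicator s l) ?_ ?_ ?_ ?_
    (fun _ _ => rfl)
  · intro l hl
    simp only [Finset.mem_finsuppAntidiag] at hl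
    simp only [depAntidiag, Finset.mem_filter, Finset.mem_pi, Finset.mem_range,
      Finset.sum_attach s l, hl.1, and_true]
    exact fun i hi => Nat.lt_succ_of_le (hl.1 ▸ Finset.single_le_sum (by simp) hi)
  · intro l hl
    simp only [depAntidiag, Finset.mem_filter] at hl
    simp only [Finset.mem_finsuppAntidiag]
    refine ⟨?_, Finsupp.support_indicator_subset _ _⟩
    rw [← hl.2, ← Finset.sum_attach]
    exact Finset.sum_congr rfl fun i _ => Finsupp.indicator_of_mem i.2 l
  · intro l hl
    simp only [Finset.mem_finsuppAntidiag] at hl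
    ext i
    by_cases hi : i ∈ s
    · exact Finsupp.indicator_of_mem hi _
    · rw [Finsupp.indicator_of_notMem hi, eq_comm, ← Finsupp.notMem_support_iff]
      exact fun h => hi (hl.2 h)
  · intro l _
    funext i hi
    exact Finsupp.indicator_of_mem hi l

end Antidiagonal

open PowerSeries in
lemma coeff_inv_prod_C_sub_X_pow {ι : Type*} [DecidableEq ι] {E P : Finset ι} (hPE : P ⊆ E)
    (b : ι → ℚ) (k : ι → ℕ) (N : ℕ) :
    coeff N (∏ e ∈ E, (C (b e) - if e ∈ P then X else 0) ^ k e)⁻¹ =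
      ∑ l ∈ depAntidiag P N, (∏ e ∈ P.attach, bq (k e) (l e e.2)) *
        ∏ e ∈ E, (b e)⁻¹ ^ (k e + if h : e ∈ P then l e h else 0) := by
  have hP : E.filter (· ∈ P) = P := by
    rw [Finset.filter_mem_eq_inter, Finset.inter_eq_right.mpr hPE]
  have split : ∀ {M : Type} [CommMonoid M] (f : ι → M),
      ∏ e ∈ E, f e = (∏ e ∈ P, f e) * ∏ e ∈ E.filter (· ∉ P), f e :=
    fun f => by rw [← Finset.prod_filter_mul_prod_filter_not E (· ∈ P), hP]
  have hpath :
      ∏ e ∈ P, (C (b e) - if e ∈ P then X else 0) ^ k e = ∏ e ∈ P, (C (b e) - X) ^ k e :=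
    Finset.prod_congr rfl fun e he => by rw [if_pos he]
  have hoff : ∏ e ∈ E.filter (· ∉ P), (C (b e) - if e ∈ P then X else 0) ^ k e =
      C (∏ e ∈ E.filter (· ∉ P), b e ^ k e) := by
    rw [map_prod]
    exact Finset.prod_congr rfl fun e he => by
      rw [if_neg (Finset.mem_filter.mp he).2, sub_zero, map_pow]
  rw [split, hpath, hoff, PowerSeries.mul_inv_rev, C_inv, coeff_C_mul, inv_prod]
  simp only [inv_C_sub_X_pow]
  rw [coeff_prod, ← sum_finsuppAntidiag_eq_sum_depAntidiag, Finset.mul_sum]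
  refine Finset.sum_congr rfl fun l _ => ?_
  have hexp_on : ∀ e ∈ P,
      (b e)⁻¹ ^ (k e + if h : e ∈ P then l e else 0) = (b e)⁻¹ ^ (k e + l e) :=
    fun e he => by rw [dif_pos he]
  have hexp_off : ∀ e ∈ E.filter (· ∉ P),
      (b e)⁻¹ ^ (k e + if h : e ∈ P then l e else 0) = (b e ^ k e)⁻¹ := fun e he => by
    rw [dif_neg (Finset.mem_filter.mp he).2, add_zero, inv_pow]
  simp only [coeff_mk]
  rw [split, Finset.prod_congr rfl hexp_on, Finset.prod_congr rfl hexp_off,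
    Finset.prod_inv_distrib, Finset.prod_attach P fun e => bq (k e) (l e), Finset.prod_mul_distrib]
  ring

namespace SimpleGraph

variable {V : Type} {G : SimpleGraph V}

lemma Walk.reachable_deleteEdges_or {x y w z : V} (p : G.Walk w z) :
    (G.deleteEdges {s(x, y)}).Reachable w z ∨ (G.deleteEdges {s(x, y)}).Reachable w x ∨
      (G.deleteEdges {s(x, y)}).Reachable w y := by
  induction p with
  | nil => exact .inl .rfl
  | @cons w w' z h p ih =>
    by_cases hc : s(w, w') = s(x, y)
    · rcases Sym2.eq_iff.mp hc with ⟨rfl, -⟩ | ⟨rfl, -⟩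
      exacts [.inr (.inl .rfl), .inr (.inr .rfl)]
    · have hadj : (G.deleteEdges {s(x, y)}).Adj w w' := by simp [h, hc]
      exact ih.imp hadj.reachable.trans (Or.imp hadj.reachable.trans hadj.reachable.trans)

/-- Removing an edge from a connected graph leaves at most two components. -/
lemma Preconnected.reachable_deleteEdges_of_not_of_not (hG : G.Preconnected) (e : Sym2 V)
    {a b c : V} (hab : ¬ (G.deleteEdges {e}).Reachable a b)
    (hbc : ¬ (G.deleteEdges {e}).Reachable b c) : (G.deleteEdges {e}).Reachable a c := by
  induction e with
  | h x y =>
    have side : ∀ w, (G.deleteEdges {s(x, y)}).Reachable w x ∨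
        (G.deleteEdges {s(x, y)}).Reachable w y := fun w =>
      (hG w x).elim fun p => (p.reachable_deleteEdges_or).elim .inl id
    rcases side a with ha | ha <;> rcases side b with hb | hb <;> rcases side c with hc | hc
    all_goals first
      | exact ha.trans hc.symm
      | exact absurd (ha.trans hb.symm) hab
      | exact absurd (hb.trans hc.symm) hbc

lemma IsTree.tpath_isPath (hT : G.IsTree) (a b : V) : (tpath G hT a b).IsPath :=
  ((isTree_iff_existsUnique_path.mp hT).2 a b).exists.choose_spec

lemma IsTree.eq_tpath (hT : G.IsTree) {a b : V} {p : G.Walk a b} (hp : p.IsPath) :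
    p = tpath G hT a b :=
  ((isTree_iff_existsUnique_path.mp hT).2 a b).unique hp (hT.tpath_isPath a b)

lemma IsTree.mem_tpath_edges_iff (hT : G.IsTree) {e : Sym2 V} {a b : V} :
    e ∈ (tpath G hT a b).edges ↔ ¬ (G.deleteEdges {e}).Reachable a b := by
  refine ⟨fun he hr => ?_, (tpath G hT a b).mem_edges_of_not_reachable_deleteEdges⟩
  induction e with
  | h x y =>
    obtain ⟨q, hq⟩ := reachable_deleteEdges_iff_exists_walk.mp hr
    exact hq (q.edges_bypass_subset_edges (hT.eq_tpath q.bypass_isPath ▸ he))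

lemma IsTree.mem_tpath_edges_iff_xor (hT : G.IsTree) (e : Sym2 V) (a u v : V) :
    e ∈ (tpath G hT a v).edges ↔
      Xor (e ∈ (tpath G hT a u).edges) (e ∈ (tpath G hT u v).edges) := by
  simp only [hT.mem_tpath_edges_iff, Xor]
  have two := hT.connected.preconnected.reachable_deleteEdges_of_not_of_not e (a := a) (b := u)
    (c := v)
  have := @Reachable.trans _ (G.deleteEdges {e})
  have := @Reachable.symm _ (G.deleteEdges {e})
  grind

end SimpleGraph

namespace CRT

open SimpleGraph PowerSeries

variable (A : CRT)

-- Spelled as in `zetaM` and `zetaU`, rather than as `A.G.edgeFinset`.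
noncomputable def edges : Finset (Sym2 A.V) := Finset.univ.filter fun e => e ∈ A.G.edgeSet

lemma mem_pEdges_iff_xor (e : Sym2 A.V) (a u v : A.V) :
    e ∈ A.pEdges a v ↔ Xor (e ∈ A.pEdges a u) (e ∈ A.pEdges u v) :=
  A.isTree.mem_tpath_edges_iff_xor e a u v

lemma notMem_pEdges_self (e : Sym2 A.V) (a : A.V) : e ∉ A.pEdges a a := by
  rw [pEdges, A.isTree.mem_tpath_edges_iff]
  exact not_not.mpr .rfl

lemma mem_edges_of_mem_pEdges {e : Sym2 A.V} {a b : A.V} (h : e ∈ A.pEdges a b) : e ∈ A.edges :=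
  Finset.mem_filter.mpr ⟨Finset.mem_univ _, Walk.edges_subset_edgeSet _ h⟩

lemma kP_eq_sum (k : Sym2 A.V → ℕ) (a b : A.V) :
    A.kP k a b = ∑ e ∈ (A.pEdges a b).toFinset, k e :=
  (List.sum_toFinset k (A.isTree.tpath_isPath a b).edges_nodup).symm

lemma ncard_neighborSet (v : A.V) : (A.G.neighborSet v).ncard = A.G.degree v := by
  rw [← SimpleGraph.card_neighborSet_eq_degree, Set.ncard_eq_toFinset_card', Set.toFinset_card]

noncomputable def edgeSum {R : Type*} [AddCommMonoid R] (r : A.V) (m : ∀ v ∈ A.Vb, R)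
    (e : Sym2 A.V) : R :=
  ∑ v ∈ A.Vb.attach.filter (fun v => e ∈ A.pEdges r v.1), m v.1 v.2

noncomputable def compositions (M : ℕ) : Finset (∀ v ∈ A.Vb, ℕ) :=
  (A.Vb.pi fun _ => Finset.Icc 1 M).filter fun m => ∑ v ∈ A.Vb.attach, m v.1 v.2 = M

/-- `I_M(V_•, u)`. -/
noncomputable def shiftedCompositions (M : ℕ) (u : {x // x ∈ A.Vb}) :
    Finset (∀ v ∈ A.Vb, ℤ) :=
  (A.Vb.pi fun _ => Finset.Icc (-(M : ℤ)) (M : ℤ)).filter fun m =>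
    (∀ v, ∀ hv : v ∈ A.Vb, v ≠ u.1 → 0 < m v hv) ∧
      (-(M : ℤ) < m u.1 u.2 ∧ m u.1 u.2 < 0) ∧ (∑ v ∈ A.Vb.attach, m v.1 v.2) = 0

noncomputable def shift (M : ℕ) (u : {x // x ∈ A.Vb}) (m : ∀ v ∈ A.Vb, ℤ) :
    ∀ v ∈ A.Vb, ℕ :=
  fun v hv => (m v hv + if v = u.1 then (M : ℤ) else 0).toNat

noncomputable def unshift (M : ℕ) (u : {x // x ∈ A.Vb}) (m : ∀ v ∈ A.Vb, ℕ) :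
    ∀ v ∈ A.Vb, ℤ :=
  fun v hv => m v hv - if v = u.1 then (M : ℤ) else 0

variable {A}

lemma edgeSum_congr {R : Type*} [AddCommMonoid R] {u : A.V} {m m' : ∀ v ∈ A.Vb, R}
    (h : ∀ v hv, v ≠ u → m v hv = m' v hv) (e : Sym2 A.V) :
    A.edgeSum u m e = A.edgeSum u m' e :=
  Finset.sum_congr rfl fun v hv => h v.1 v.2 fun hvu =>
    A.notMem_pEdges_self e u (hvu ▸ (Finset.mem_filter.mp hv).2)

/-- For `e` on the path from `r` to `u`, the black vertices beyond `e` seen from `r` are exactly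
those not beyond `e` seen from `u`. -/
lemma edgeSum_eq_ite_of_sum_eq_zero {R : Type*} [AddCommGroup R] {m : ∀ v ∈ A.Vb, R}
    (hm : ∑ v ∈ A.Vb.attach, m v.1 v.2 = 0) (r u : A.V) (e : Sym2 A.V) :
    A.edgeSum r m e = if e ∈ A.pEdges r u then -A.edgeSum u m e else A.edgeSum u m e := by
  unfold edgeSum
  split_ifs with he
  · rw [eq_neg_iff_add_eq_zero, ← hm, ← Finset.sum_filter_add_sum_filter_not A.Vb.attach
      (fun v => e ∈ A.pEdges u v.1), add_comm]
    congr 2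
    ext v
    rw [Finset.mem_filter, Finset.mem_filter, A.mem_pEdges_iff_xor e r u v.1]
    simp [Xor, he]
  · congr 1
    ext v
    rw [Finset.mem_filter, Finset.mem_filter, A.mem_pEdges_iff_xor e r u v.1]
    simp [Xor, he]

lemma sum_attach_ite_eq {R : Type*} [AddCommMonoid R] (u : {x // x ∈ A.Vb}) (c : R) :
    ∑ v ∈ A.Vb.attach, (if v.1 = u.1 then c else 0) = c := by
  simp

lemma shift_mem_compositions {M : ℕ} {u : {x // x ∈ A.Vb}} {m : ∀ v ∈ A.Vb, ℤ}
    (hm : m ∈ A.shiftedCompositions M u) : A.shift M u m ∈ A.compositions M := by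
  simp only [shiftedCompositions, Finset.mem_filter, Finset.mem_pi, Finset.mem_Icc] at hm
  obtain ⟨hbd, hpos, hu, hsum⟩ := hm
  have hnn : ∀ v hv, 0 ≤ m v hv + if v = u.1 then (M : ℤ) else 0 := fun v hv => by
    split_ifs with h
    · subst h; omega
    · simpa using (hpos v hv h).le
  simp only [compositions, Finset.mem_filter, Finset.mem_pi, Finset.mem_Icc, shift]
  refine ⟨fun v hv => ?_, ?_⟩
  · have := hbd v hv
    split_ifs with h
    · subst h; omega
    · have := hpos v hv h; omega
  · zify
    simp only [Int.toNat_of_nonneg (hnn _ _), Finset.sum_add_distrib, hsum, sum_attach_ite_eq,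
      zero_add]

lemma unshift_mem_shiftedCompositions {M : ℕ} {u : {x // x ∈ A.Vb}} {w : A.V} (hw : w ∈ A.Vb)
    (hwu : w ≠ u.1) {m : ∀ v ∈ A.Vb, ℕ} (hm : m ∈ A.compositions M) :
    A.unshift M u m ∈ A.shiftedCompositions M u := by
  simp only [compositions, Finset.mem_filter, Finset.mem_pi, Finset.mem_Icc] at hm
  obtain ⟨hbd, hsum⟩ := hm
  have hlt : m u.1 u.2 < M := by
    have := Finset.add_le_sum (fun _ _ => Nat.zero_le _) (Finset.mem_attach _ u)
      (Finset.mem_attach _ ⟨w, hw⟩) (Subtype.coe_ne_coe.mp hwu.symm) (f := fun v => m v.1 v.2)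
    dsimp only at this
    have := (hbd w hw).1
    omega
  simp only [shiftedCompositions, unshift, Finset.mem_filter, Finset.mem_pi, Finset.mem_Icc]
  refine ⟨fun v hv => ?_, fun v hv hvu => ?_, ?_, ?_⟩
  · have := hbd v hv
    split_ifs <;> omega
  · have := hbd v hv
    simp [hvu]; omega
  · have := hbd u.1 u.2
    simp only [if_true]; omega
  · rw [Finset.sum_sub_distrib, sum_attach_ite_eq, ← Nat.cast_sum, hsum, sub_self]

lemma sum_shiftedCompositions {R : Type*} [AddCommMonoid R] (M : ℕ) (u : {x // x ∈ A.Vb})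
    {w : A.V} (hw : w ∈ A.Vb) (hwu : w ≠ u.1) (Φ : (∀ v ∈ A.Vb, ℕ) → R) :
    ∑ m ∈ A.shiftedCompositions M u, Φ (A.shift M u m) = ∑ m ∈ A.compositions M, Φ m := by
  refine Finset.sum_nbij' (A.shift M u) (A.unshift M u) (fun m hm => shift_mem_compositions hm)
    (fun m hm => unshift_mem_shiftedCompositions hw hwu hm) (fun m hm => ?_) (fun m hm => ?_)
    (fun _ _ => rfl)
  · simp only [shiftedCompositions, Finset.mem_filter] at hm
    funext v hv
    simp only [shift, unshift]
    split_ifs with h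
    · subst h; omega
    · have := hm.2.1 v hv h; omega
  · funext v hv
    simp only [shift, unshift]
    omega

lemma edgeSum_rt_eq_ite {M : ℕ} {u : {x // x ∈ A.Vb}} {m : ∀ v ∈ A.Vb, ℤ}
    (hm : m ∈ A.shiftedCompositions M u) (e : Sym2 A.V) :
    A.edgeSum A.rt (fun v hv => (m v hv : ℚ)) e =
      if e ∈ A.pEdges A.rt u.1 then -A.edgeSum u.1 (fun v hv => (A.shift M u m v hv : ℚ)) e
      else A.edgeSum u.1 (fun v hv => (A.shift M u m v hv : ℚ)) e := by
  simp only [shiftedCompositions, Finset.mem_filter] at hm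
  obtain ⟨-, hpos, -, hsum⟩ := hm
  have hsumℚ : ∑ v ∈ A.Vb.attach, (m v.1 v.2 : ℚ) = 0 := by exact_mod_cast hsum
  have hshift : ∀ v hv, v ≠ u.1 → (m v hv : ℚ) = (A.shift M u m v hv : ℚ) :=
    fun v hv h => by
      rw [shift, if_neg h, add_zero, ← Int.cast_natCast, Int.toNat_of_nonneg (hpos v hv h).le]
  rw [edgeSum_eq_ite_of_sum_eq_zero hsumℚ A.rt u.1, edgeSum_congr hshift]

lemma prod_edges_eq_C_mul_prod {M : ℕ} {u : {x // x ∈ A.Vb}} {m : ∀ v ∈ A.Vb, ℤ}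
    (hm : m ∈ A.shiftedCompositions M u) (k : Sym2 A.V → ℕ) :
    ∏ e ∈ A.edges, (C (A.edgeSum A.rt (fun v hv => (m v hv : ℚ)) e) +
        if e ∈ A.pEdges A.rt u.1 then X else 0) ^ k e =
      C ((-1) ^ A.kP k A.rt u.1) * ∏ e ∈ A.edges,
        (C (A.edgeSum u.1 (fun v hv => (A.shift M u m v hv : ℚ)) e) -
          if e ∈ (A.pEdges A.rt u.1).toFinset then X else 0) ^ k e := by
  set P := (A.pEdges A.rt u.1).toFinset
  have hP : A.edges.filter (· ∈ P) = P := by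
    rw [Finset.filter_mem_eq_inter, Finset.inter_eq_right]
    exact fun e he => A.mem_edges_of_mem_pEdges (List.mem_toFinset.mp he)
  have hfactor : ∀ e, (C (A.edgeSum A.rt (fun v hv => (m v hv : ℚ)) e) +
      if e ∈ A.pEdges A.rt u.1 then X else 0) ^ k e =
        C (if e ∈ P then (-1) ^ k e else 1) *
          (C (A.edgeSum u.1 (fun v hv => (A.shift M u m v hv : ℚ)) e) -
            if e ∈ P then X else 0) ^ k e := fun e => by
    rw [edgeSum_rt_eq_ite hm]
    by_cases he : e ∈ A.pEdges A.rt u.1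
    · simp only [he, P, List.mem_toFinset, if_true, map_neg, map_pow, map_one, ← neg_pow]
      ring
    · simp [he, P]
  rw [Finset.prod_congr rfl fun e _ => hfactor e, Finset.prod_mul_distrib, ← map_prod,
    ← Finset.prod_filter, hP, Finset.prod_pow_eq_pow_sum, kP_eq_sum]

lemma zetaU_eq_smul_sum_compositions (k : Sym2 A.V → ℕ) (M : ℕ) (u : {x // x ∈ A.Vb})
    {w : A.V} (hw : w ∈ A.Vb) (hwu : w ≠ u.1) :
    zetaU A k M u = (-1 : ℚ) ^ A.kP k A.rt u.1 • ∑ m ∈ A.compositions M,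
      (∏ e ∈ A.edges, (C (A.edgeSum u.1 (fun v hv => (m v hv : ℚ)) e) -
        if e ∈ (A.pEdges A.rt u.1).toFinset then X else 0) ^ k e)⁻¹ := by
  rw [Finset.smul_sum, ← sum_shiftedCompositions M u hw hwu]
  refine Finset.sum_congr rfl fun m hm => ?_
  change (∏ e ∈ A.edges, (C (A.edgeSum A.rt (fun v hv => (m v hv : ℚ)) e) +
    if e ∈ A.pEdges A.rt u.1 then X else 0) ^ k e)⁻¹ = _
  rw [prod_edges_eq_C_mul_prod hm, PowerSeries.mul_inv_rev, C_inv, ← inv_pow, inv_neg_one,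
    smul_eq_C_mul, mul_comm]

lemma zetaM_reroot (u : A.V) (k : Sym2 (A.reroot u).V → ℕ) (M : ℕ) :
    (A.reroot u).zetaM k M = ∑ m ∈ A.compositions M,
      ∏ e ∈ A.edges, (A.edgeSum u (fun v hv => (m v hv : ℚ)) e)⁻¹ ^ k e :=
  rfl

lemma zetaU_eq_smul_mk (k : Sym2 A.V → ℕ) (M : ℕ) (u : {x // x ∈ A.Vb}) {w : A.V}
    (hw : w ∈ A.Vb) (hwu : w ≠ u.1) :
    zetaU A k M u = (-1 : ℚ) ^ A.kP k A.rt u.1 • PowerSeries.mk fun N =>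
      ∑ l ∈ depAntidiag (A.pEdges A.rt u.1).toFinset N,
        (∏ e ∈ (A.pEdges A.rt u.1).toFinset.attach, bq (k e.1) (l e.1 e.2)) *
          (A.reroot u.1).zetaM
            (fun e => k e + if h : e ∈ (A.pEdges A.rt u.1).toFinset then l e h else 0) M := by
  have hPE : (A.pEdges A.rt u.1).toFinset ⊆ A.edges :=
    fun e he => A.mem_edges_of_mem_pEdges (List.mem_toFinset.mp he)
  rw [zetaU_eq_smul_sum_compositions k M u hw hwu]
  congr 1
  ext N
  simp only [map_sum, coeff_mk, coeff_inv_prod_C_sub_X_pow hPE]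
  rw [Finset.sum_comm]
  refine Finset.sum_congr rfl fun l _ => ?_
  rw [← Finset.mul_sum]
  congr 1
  -- the two sides differ only in the `Decidable` instance of the `dite` in the exponent
  convert (zetaM_reroot u.1 _ M).symm using 5
  congr

end CRT

lemma Harvestable.exists_mem_Vb_ne {A : CRT} {k : Sym2 A.V → ℕ} (hH : Harvestable A k)
    (u : A.V) : ∃ w ∈ A.Vb, w ≠ u := by
  have : Nontrivial A.V := by
    obtain ⟨w, hw⟩ := Set.nonempty_of_ncard_ne_zero (hH.1.trans_ne one_ne_zero)
    exact ⟨A.rt, w, hw.ne⟩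
  obtain ⟨w₁, w₂, hne, h₁, h₂⟩ := A.isTree.exists_ne_and_degree_eq_one
  have leaf_mem : ∀ w, A.G.degree w = 1 → w ∈ A.Vb := fun w hw =>
    A.terminal_mem w ((A.ncard_neighborSet w).trans hw)
  by_cases hu : w₁ = u
  · exact ⟨w₂, leaf_mem w₂ h₂, hu ▸ hne.symm⟩
  · exact ⟨w₁, leaf_mem w₁ h₁, hu⟩


/-- for a harvestable pair (X, k) and every M ≥ 0,
ζ^ш_{Ŝ,M}(X; k) = ∑_{v ∈ V_•} (-1)^{k_{P(rt,v)}} ∑_{l ∈ ℤ_{≥0}^{P(rt,v)}}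
b_{P(rt,v)}(k,l) ζ_M(X_v; k+l) t^{l_{P(rt,v)}} in ℚ[[t]]. -/
theorem stmt13 (A : CRT) (k : Sym2 A.V → ℕ) (hH : Harvestable A k) (M : ℕ) :
    zetaShat A k M
      = ∑ v ∈ A.Vb.attach, ((-1 : ℚ) ^ A.kP k A.rt v.1) •
          PowerSeries.mk (fun N =>
            ∑ l ∈ ((A.pEdges A.rt v.1).toFinset.pi fun _ => Finset.range (N + 1)).filter
                (fun l =>
                  (∑ e ∈ (A.pEdges A.rt v.1).toFinset.attach, l e.1 e.2) = N),
              (∏ e ∈ (A.pEdges A.rt v.1).toFinset.attach, bq (k e.1) (l e.1 e.2)) *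
                CRT.zetaM (A.reroot v.1)
                  (fun e => k e +
                    (if h : e ∈ (A.pEdges A.rt v.1).toFinset then l e h else 0)) M) := by
  refine Finset.sum_congr rfl fun u _ => ?_
  obtain ⟨w, hw, hwu⟩ := hH.exists_mem_Vb_ne u.1
  exact CRT.zetaU_eq_smul_mk k M u hw hwu
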